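/- Let Γ = (V,E) be a finite d-regular graph with d ≥ 1 and let 2 ≤ n ≤ |V|. Then ρ_Γ(n) ≤ h'_n(Γ) ≤ n·ρ_Γ(n), where ρ_Γ(n) = min max_{1≤i≤n} |∂S_i|/(d·|S_i|), the minimum being over all collections of n non-empty pairwise disjoint subsets S_1,…,S_n ⊆ V, and h'_n(Γ) = h_n(Γ)/d. -/

import Mathlib

/-!
Both constants are infima of `max_i |∂S_i| / |S_i|`: `d ρ` over families of `n` disjoint
non-empty sets, `h_n` over partitions. Partitions are such families, whence `ρ ≤ h_n / d`.
Conversely, in a family with ratio at most `m`, replace a largest member `S_{i₀}` by the complement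
of the union of the others. This gives a partition, and the boundary of the new part lies in the
union of the boundaries of the other `S_k`, so it has at most
`m ∑_{k ≠ i₀} |S_k| ≤ (n - 1) m |S_{i₀}|` edges. Hence `h_n ≤ (n - 1) d ρ`.
-/

open scoped Pointwise

namespace Multiway

variable {V : Type*}

/-- The edge boundary `∂A`: the set of edges with one endpoint in `A` and the other in `Vᶜ∖A`. -/
def edgeBdry (G : SimpleGraph V) (A : Set V) : Set (Sym2 V) :=
  {e | e ∈ G.edgeSet ∧ ∃ u v, e = s(u, v) ∧ u ∈ A ∧ v ∉ A}

/-- The symmetric vertex boundary `δA`: vertices incident to an edge crossing `A`. -/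
def vertBdry (G : SimpleGraph V) (A : Set V) : Set V :=
  {x | ∃ y, G.Adj x y ∧ ¬ (x ∈ A ↔ y ∈ A)}

/-- A partition of the vertex set into `n` non-empty pairwise disjoint sets. -/
def IsNPartition (n : ℕ) (A : Fin n → Set V) : Prop :=
  (∀ i, (A i).Nonempty) ∧ (∀ i j, i ≠ j → Disjoint (A i) (A j)) ∧ (⋃ i, A i) = Set.univ

/-- `max_i |∂A_i| / |A_i|`. -/
noncomputable def edgeRatioMax (G : SimpleGraph V) {n : ℕ} (A : Fin n → Set V) : ℝ :=
  ⨆ i, ((edgeBdry G (A i)).ncard : ℝ) / ((A i).ncard : ℝ)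

/-- `max_i |δA_i| / |A_i|`. -/
noncomputable def vertRatioMax (G : SimpleGraph V) {n : ℕ} (A : Fin n → Set V) : ℝ :=
  ⨆ i, ((vertBdry G (A i)).ncard : ℝ) / ((A i).ncard : ℝ)

/-- The `n`-way isoperimetric constant `h_n(Γ)`. -/
noncomputable def multiH (G : SimpleGraph V) (n : ℕ) : ℝ :=
  sInf {r | ∃ A : Fin n → Set V, IsNPartition n A ∧ r = edgeRatioMax G A}

/-- The `n`-way symmetric vertex isoperimetric constant `ι_n(Γ)`. -/
noncomputable def multiIota (G : SimpleGraph V) (n : ℕ) : ℝ :=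
  sInf {r | ∃ A : Fin n → Set V, IsNPartition n A ∧ r = vertRatioMax G A}

/-- A graph is vertex-transitive if its automorphism group acts transitively on vertices. -/
def VertexTransitive (G : SimpleGraph V) : Prop :=
  ∀ u v : V, ∃ φ : G ≃g G, φ u = v


/-- `ρ_Γ(n)`: minimum of `max_i |∂S_i|/(d·|S_i|)` over collections of `n` non-empty
pairwise disjoint subsets (not necessarily covering `V`). -/
noncomputable def rhoLGT (G : SimpleGraph V) (d n : ℕ) : ℝ :=
  sInf {r | ∃ S : Fin n → Set V, (∀ i, (S i).Nonempty) ∧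
    (∀ i j, i ≠ j → Disjoint (S i) (S j)) ∧
    r = ⨆ i, ((edgeBdry G (S i)).ncard : ℝ) / (d * (S i).ncard)}

/-- `d · ρ_Γ(n)`: the infimum defining `rhoLGT` without the normalisation by the degree. -/
noncomputable def multiRho (G : SimpleGraph V) (n : ℕ) : ℝ :=
  sInf {r | ∃ S : Fin n → Set V, (∀ i, (S i).Nonempty) ∧
    (∀ i j, i ≠ j → Disjoint (S i) (S j)) ∧ r = edgeRatioMax G S}

theorem rhoLGT_eq_multiRho_div (G : SimpleGraph V) (d n : ℕ) :
    rhoLGT G d n = multiRho G n / d := by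
  have hsup : ∀ S : Fin n → Set V, (⨆ i, ((edgeBdry G (S i)).ncard : ℝ) / (d * (S i).ncard)) =
      (d : ℝ)⁻¹ * edgeRatioMax G S := fun S => by
    rw [edgeRatioMax, Real.mul_iSup_of_nonneg (by positivity)]
    exact iSup_congr fun i => by ring
  rw [div_eq_inv_mul, multiRho, ← smul_eq_mul, ← Real.sInf_smul_of_nonneg (by positivity),
    rhoLGT]
  congr 1
  ext r
  simp only [hsup, Set.mem_smul_set, smul_eq_mul]
  constructor
  · rintro ⟨S, hne, hdisj, rfl⟩
    exact ⟨_, ⟨S, hne, hdisj, rfl⟩, rfl⟩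
  · rintro ⟨_, ⟨S, hne, hdisj, rfl⟩, rfl⟩
    exact ⟨S, hne, hdisj, rfl⟩

section Boundary

variable (G : SimpleGraph V)

theorem edgeBdry_compl (A : Set V) : edgeBdry G Aᶜ = edgeBdry G A := by
  ext e
  constructor
  · rintro ⟨he, u, v, rfl, hu, hv⟩
    exact ⟨he, v, u, Sym2.eq_swap, not_not.mp hv, hu⟩
  · rintro ⟨he, u, v, rfl, hu, hv⟩
    exact ⟨he, v, u, Sym2.eq_swap, hv, not_not.mpr hu⟩

theorem edgeBdry_iUnion_subset {ι : Sort*} (S : ι → Set V) :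
    edgeBdry G (⋃ i, S i) ⊆ ⋃ i, edgeBdry G (S i) := by
  rintro e ⟨he, u, v, rfl, hu, hv⟩
  obtain ⟨i, hi⟩ := Set.mem_iUnion.mp hu
  exact Set.mem_iUnion_of_mem i ⟨he, u, v, rfl, hi, fun h => hv (Set.mem_iUnion_of_mem i h)⟩

end Boundary

section Ratio

variable (G : SimpleGraph V) {n : ℕ}

theorem edgeRatioMax_nonneg (A : Fin n → Set V) : 0 ≤ edgeRatioMax G A :=
  Real.iSup_nonneg fun _ => by positivity

theorem ncard_edgeBdry_le_edgeRatioMax_mul [Finite V] {A : Fin n → Set V} (i : Fin n)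
    (hA : (A i).Nonempty) :
    ((edgeBdry G (A i)).ncard : ℝ) ≤ edgeRatioMax G A * (A i).ncard := by
  rw [← div_le_iff₀ (by exact_mod_cast (Set.ncard_pos (Set.toFinite _)).2 hA)]
  exact le_ciSup (f := fun i => ((edgeBdry G (A i)).ncard : ℝ) / (A i).ncard)
    (Finite.bddAbove_range _) i

theorem edgeRatioMax_le [Finite V] {A : Fin n → Set V} (hA : ∀ i, (A i).Nonempty) {c : ℝ}
    (hc : 0 ≤ c) (h : ∀ i, ((edgeBdry G (A i)).ncard : ℝ) ≤ c * (A i).ncard) :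
    edgeRatioMax G A ≤ c :=
  Real.iSup_le (fun i =>
    (div_le_iff₀ (by exact_mod_cast (Set.ncard_pos (Set.toFinite _)).2 (hA i))).2 (h i)) hc

end Ratio

section Completion

variable {n : ℕ}

def completeAt (S : Fin n → Set V) (i₀ : Fin n) : Fin n → Set V :=
  Function.update S i₀ (⋃ k ∈ ({i₀}ᶜ : Finset (Fin n)), S k)ᶜ

variable {S : Fin n → Set V} {i₀ : Fin n}

theorem completeAt_self : completeAt S i₀ i₀ = (⋃ k ∈ ({i₀}ᶜ : Finset (Fin n)), S k)ᶜ :=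
  Function.update_self _ _ _

theorem completeAt_of_ne {j : Fin n} (hj : j ≠ i₀) : completeAt S i₀ j = S j :=
  Function.update_of_ne hj _ _

theorem disjoint_completeAt_self {j : Fin n} (hj : j ≠ i₀) :
    Disjoint (completeAt S i₀ i₀) (S j) := by
  rw [completeAt_self]
  exact disjoint_compl_left.mono_right (Set.subset_biUnion_of_mem (u := S) (by simpa using hj))

theorem subset_completeAt_self (hdisj : ∀ i j, i ≠ j → Disjoint (S i) (S j)) :
    S i₀ ⊆ completeAt S i₀ i₀ := by
  rw [completeAt_self, Set.subset_compl_iff_disjoint_right, Set.disjoint_iUnion₂_right]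
  intro k hk
  exact hdisj i₀ k (by simpa [eq_comm] using hk)

theorem isNPartition_completeAt (hne : ∀ i, (S i).Nonempty)
    (hdisj : ∀ i j, i ≠ j → Disjoint (S i) (S j)) (i₀ : Fin n) :
    IsNPartition n (completeAt S i₀) := by
  refine ⟨fun j => ?_, fun i j hij => ?_, Set.eq_univ_of_forall fun x => ?_⟩
  · rcases eq_or_ne j i₀ with rfl | hj
    · exact (hne j).mono (subset_completeAt_self hdisj)
    · exact completeAt_of_ne hj ▸ hne j
  · rcases eq_or_ne i i₀ with rfl | hi
    · rw [completeAt_of_ne hij.symm]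
      exact disjoint_completeAt_self hij.symm
    rcases eq_or_ne j i₀ with rfl | hj
    · rw [completeAt_of_ne hi]
      exact (disjoint_completeAt_self hi).symm
    rw [completeAt_of_ne hi, completeAt_of_ne hj]
    exact hdisj i j hij
  · by_cases hx : x ∈ completeAt S i₀ i₀
    · exact Set.mem_iUnion_of_mem i₀ hx
    rw [completeAt_self, Set.notMem_compl_iff] at hx
    obtain ⟨k, hk, hxk⟩ := Set.mem_iUnion₂.mp hx
    exact Set.mem_iUnion_of_mem k (completeAt_of_ne (by simpa using hk) ▸ hxk)

theorem edgeBdry_completeAt_self_subset (G : SimpleGraph V) :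
    edgeBdry G (completeAt S i₀ i₀) ⊆ ⋃ k ∈ ({i₀}ᶜ : Finset (Fin n)), edgeBdry G (S k) := by
  rw [completeAt_self, edgeBdry_compl]
  exact (edgeBdry_iUnion_subset G _).trans (Set.iUnion_mono fun k => edgeBdry_iUnion_subset G _)

theorem ncard_edgeBdry_completeAt_self_le [Finite V] (G : SimpleGraph V)
    (hne : ∀ i, (S i).Nonempty) (hmax : ∀ k, (S k).ncard ≤ (S i₀).ncard) :
    ((edgeBdry G (completeAt S i₀ i₀)).ncard : ℝ) ≤
      (n - 1) * edgeRatioMax G S * (S i₀).ncard := by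
  calc ((edgeBdry G (completeAt S i₀ i₀)).ncard : ℝ)
      ≤ ∑ k ∈ ({i₀}ᶜ : Finset (Fin n)), ((edgeBdry G (S k)).ncard : ℝ) := by
        exact_mod_cast (Set.ncard_le_ncard (edgeBdry_completeAt_self_subset G)).trans
          (Finset.set_ncard_biUnion_le _ _)
    _ ≤ ∑ k ∈ ({i₀}ᶜ : Finset (Fin n)), edgeRatioMax G S * (S i₀).ncard := by
        refine Finset.sum_le_sum fun k _ =>
          (ncard_edgeBdry_le_edgeRatioMax_mul G k (hne k)).trans ?_
        exact mul_le_mul_of_nonneg_left (by exact_mod_cast hmax k) (edgeRatioMax_nonneg G S)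
    _ = (n - 1) * edgeRatioMax G S * (S i₀).ncard := by
        rw [Finset.sum_const, Finset.card_compl, Finset.card_singleton, Fintype.card_fin,
          nsmul_eq_mul, Nat.cast_sub i₀.pos, Nat.cast_one, mul_assoc]

theorem edgeRatioMax_completeAt_le [Finite V] (G : SimpleGraph V) (hn : 2 ≤ n)
    (hne : ∀ i, (S i).Nonempty) (hdisj : ∀ i j, i ≠ j → Disjoint (S i) (S j))
    (hmax : ∀ k, (S k).ncard ≤ (S i₀).ncard) :
    edgeRatioMax G (completeAt S i₀) ≤ (n - 1) * edgeRatioMax G S := by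
  have hn1 : (1 : ℝ) ≤ n - 1 := by
    have : (2 : ℝ) ≤ n := by exact_mod_cast hn
    linarith
  have hm := edgeRatioMax_nonneg G S
  refine edgeRatioMax_le G (isNPartition_completeAt hne hdisj i₀).1 (by positivity) fun j => ?_
  rcases eq_or_ne j i₀ with rfl | hj
  · refine (ncard_edgeBdry_completeAt_self_le G hne hmax).trans ?_
    exact mul_le_mul_of_nonneg_left
      (by exact_mod_cast Set.ncard_le_ncard (subset_completeAt_self hdisj)) (by positivity)
  · rw [completeAt_of_ne hj]
    refine (ncard_edgeBdry_le_edgeRatioMax_mul G j (hne j)).trans ?_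
    gcongr
    exact le_mul_of_one_le_left hm hn1

end Completion

section Infimum

variable (G : SimpleGraph V) {n : ℕ}

theorem exists_isNPartition [Fintype V] (hn : 1 ≤ n) (hcard : n ≤ Fintype.card V) :
    ∃ A : Fin n → Set V, IsNPartition n A := by
  obtain ⟨f⟩ := Function.Embedding.nonempty_of_card_le (α := Fin n) (by simpa using hcard)
  exact ⟨_, isNPartition_completeAt (S := fun i => {f i}) (fun _ => Set.singleton_nonempty _)
    (fun _ _ hij => Set.disjoint_singleton.2 (f.injective.ne hij)) ⟨0, hn⟩⟩

theorem exists_isNPartition_edgeRatioMax_le [Finite V] (hn : 2 ≤ n) {S : Fin n → Set V}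
    (hne : ∀ i, (S i).Nonempty) (hdisj : ∀ i j, i ≠ j → Disjoint (S i) (S j)) :
    ∃ A, IsNPartition n A ∧ edgeRatioMax G A ≤ (n - 1) * edgeRatioMax G S := by
  have : Nonempty (Fin n) := ⟨⟨0, by omega⟩⟩
  obtain ⟨i₀, hmax⟩ := Finite.exists_max fun i => (S i).ncard
  exact ⟨_, isNPartition_completeAt hne hdisj i₀, edgeRatioMax_completeAt_le G hn hne hdisj hmax⟩

theorem multiRho_le_edgeRatioMax {S : Fin n → Set V} (hne : ∀ i, (S i).Nonempty)
    (hdisj : ∀ i j, i ≠ j → Disjoint (S i) (S j)) : multiRho G n ≤ edgeRatioMax G S :=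
  csInf_le ⟨0, by rintro _ ⟨S, -, -, rfl⟩; exact edgeRatioMax_nonneg G S⟩ ⟨S, hne, hdisj, rfl⟩

theorem multiH_le_edgeRatioMax {A : Fin n → Set V} (hA : IsNPartition n A) :
    multiH G n ≤ edgeRatioMax G A :=
  csInf_le ⟨0, by rintro _ ⟨A, -, rfl⟩; exact edgeRatioMax_nonneg G A⟩ ⟨A, hA, rfl⟩

theorem multiRho_nonneg : 0 ≤ multiRho G n :=
  Real.sInf_nonneg (by rintro _ ⟨S, -, -, rfl⟩; exact edgeRatioMax_nonneg G S)

theorem multiRho_le_multiH [Fintype V] (hn : 1 ≤ n) (hcard : n ≤ Fintype.card V) :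
    multiRho G n ≤ multiH G n := by
  obtain ⟨A, hA⟩ := exists_isNPartition hn hcard
  refine le_csInf ⟨_, A, hA, rfl⟩ ?_
  rintro _ ⟨B, hB, rfl⟩
  exact multiRho_le_edgeRatioMax G hB.1 hB.2.1

theorem multiH_le_mul_multiRho [Fintype V] (hn : 2 ≤ n) (hcard : n ≤ Fintype.card V) :
    multiH G n ≤ (n - 1) * multiRho G n := by
  have hn1 : (0 : ℝ) < n - 1 := by
    have : (2 : ℝ) ≤ n := by exact_mod_cast hn
    linarith
  obtain ⟨A, hA⟩ := exists_isNPartition (by omega) hcard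
  rw [← div_le_iff₀' hn1]
  refine le_csInf ⟨_, A, hA.1, hA.2.1, rfl⟩ ?_
  rintro _ ⟨S, hne, hdisj, rfl⟩
  obtain ⟨B, hB, hBS⟩ := exists_isNPartition_edgeRatioMax_le G hn hne hdisj
  rw [div_le_iff₀' hn1]
  exact (multiH_le_edgeRatioMax G hB).trans hBS

end Infimum

theorem rho_le_normalized_h_le_general {V : Type*} [Fintype V] (G : SimpleGraph V)
    (d : ℕ) (n : ℕ) (hn : 2 ≤ n) (hcard : n ≤ Fintype.card V) :
    rhoLGT G d n ≤ multiH G n / d ∧ multiH G n / d ≤ n * rhoLGT G d n := by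
  rw [rhoLGT_eq_multiRho_div, mul_div_assoc']
  refine ⟨div_le_div_of_nonneg_right (multiRho_le_multiH G (by omega) hcard) d.cast_nonneg,
    div_le_div_of_nonneg_right ?_ d.cast_nonneg⟩
  calc multiH G n ≤ (n - 1) * multiRho G n := multiH_le_mul_multiRho G hn hcard
    _ ≤ n * multiRho G n := mul_le_mul_of_nonneg_right (by linarith) (multiRho_nonneg G)

theorem rho_le_normalized_h_le {V : Type*} [Fintype V] (G : SimpleGraph V)
    [DecidableRel G.Adj] (d : ℕ) (hd : 1 ≤ d) (hreg : G.IsRegularOfDegree d)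
    (n : ℕ) (hn : 2 ≤ n) (hcard : n ≤ Fintype.card V) :
    rhoLGT G d n ≤ multiH G n / d ∧ multiH G n / d ≤ n * rhoLGT G d n :=
  rho_le_normalized_h_le_general G d n hn hcard

end Multiway
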